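/- Let X and Y be real Banach spaces, let D_X ⊆ X and D_Y ⊆ Y be dense subsets, and let r > 0. Then there exists a uniform homeomorphism u : X → Y with Lip_∞(u)·Lip_∞(u⁻¹) < e^r if and only if there exist B > 0, r' ∈ (0, r) and a sequence of correspondences ℛ_i ⊆ D_X × D_Y, decreasing in inclusion, such that: (1) for every i and all v, v' ∈ D_X, w, w' ∈ D_Y with v ℛ_i w and v' ℛ_i w', one has ‖w − w'‖ ≤ e^{r'}·‖v − v'‖ + B; (2) for every i and all v, v', w, w' with v ℛ_i w and v' ℛ_i w', one has ‖v − v'‖ ≤ ‖w − w'‖ + B; (3) for every ε > 0 there exist δ > 0 and i such that for all v, v' ∈ D_X with ‖v − v'‖ < δ, one has ‖w − w'‖ < ε whenever v ℛ_i w and v' ℛ_i w'; (4) for every ε > 0 there exist δ > 0 and i such that for all w, w' ∈ D_Y with ‖w − w'‖ < δ, one has ‖v − v'‖ < ε whenever v ℛ_i w and v' ℛ_i w'. -/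
import Mathlib


/- Context: for u : X → Y between normed spaces,
Lip_∞(u) = inf_{η>0} sup{ ‖u x − u y‖/‖x − y‖ : ‖x − y‖ ≥ η }, formalized below as the
infimum of the set of constants A for which some threshold η > 0 works.  A uniform
homeomorphism is a bijection which is uniformly continuous in both directions.  A
correspondence between D_X and D_Y relates every point of D_X to some point of D_Y and
vice versa. -/

/-- `Lip_∞(u)`: the infimum over thresholds `η > 0` of the Lipschitz constants of `u`
at distances `≥ η`. -/
noncomputable def LipInf {X Y : Type*} [NormedAddCommGroup X] [NormedAddCommGroup Y]
    (u : X → Y) : ℝ :=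
  sInf {A : ℝ | ∃ η > (0 : ℝ), ∀ x y : X, η ≤ ‖x - y‖ → ‖u x - u y‖ ≤ A * ‖x - y‖}

open Filter Topology

lemma aff_bound {X Y : Type*} [NormedAddCommGroup X] [NormedSpace ℝ X] [NormedAddCommGroup Y]
    {f : X → Y} (hf : UniformContinuous f) :
    ∃ C > (0:ℝ), ∀ x y : X, ‖f x - f y‖ ≤ C * ‖x - y‖ + C := by
  obtain ⟨δ, hδ, hδ1⟩ := Metric.uniformContinuous_iff.mp hf 1 one_pos
  have key : ∀ n : ℕ, ∀ x y : X, ‖x - y‖ ≤ n * (δ/2) → ‖f x - f y‖ ≤ n := by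
    intro n
    induction n with
    | zero =>
      intro x y h
      have : x = y := by
        have : ‖x - y‖ ≤ 0 := by simpa using h
        have := le_antisymm this (norm_nonneg _)
        rwa [norm_sub_eq_zero_iff] at this
      simp [this]
    | succ n ih =>
      intro x y h
      by_cases hc : ‖x - y‖ ≤ n * (δ/2)
      · exact (ih x y hc).trans (by push_cast; linarith)
      · push_neg at hc
        have hxy : 0 < ‖x - y‖ := lt_of_le_of_lt (by positivity) hc
        set t : ℝ := (n * (δ/2)) / ‖x - y‖ with ht
        set z : X := x + t • (y - x) with hz
        have ht0 : 0 ≤ t := by positivity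
        have ht1 : t ≤ 1 := by rw [ht, div_le_one hxy]; exact hc.le
        have htn : t * ‖x - y‖ = n * (δ/2) := by
          rw [ht]; field_simp
        have hxz : ‖x - z‖ = n * (δ/2) := by
          have : x - z = -(t • (y - x)) := by rw [hz]; abel
          rw [this, norm_neg, norm_smul, Real.norm_eq_abs, abs_of_nonneg ht0,
            norm_sub_rev, htn]
        have hzy : ‖z - y‖ ≤ δ/2 := by
          have : z - y = -((1 - t) • (y - x)) := by
            rw [hz, sub_smul, one_smul]; module
          rw [this, norm_neg, norm_smul, Real.norm_eq_abs, abs_of_nonneg (by linarith),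
            norm_sub_rev, sub_mul, one_mul, htn]
          push_cast at h
          linarith
        have h1 : ‖f x - f z‖ ≤ n := ih x z (le_of_eq hxz)
        have h2 : ‖f z - f y‖ ≤ 1 := by
          have := hδ1 (a := z) (b := y) (by rw [dist_eq_norm]; linarith)
          rw [dist_eq_norm] at this; linarith
        calc ‖f x - f y‖ ≤ ‖f x - f z‖ + ‖f z - f y‖ := by
              have := norm_sub_le_norm_sub_add_norm_sub (f x) (f z) (f y); linarith [norm_sub_le (f x - f z) (f z - f y)]
          _ ≤ n + 1 := by push_cast; linarith
          _ = ((n+1 : ℕ) : ℝ) := by push_cast; ring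
  refine ⟨2/δ + 1, by positivity, fun x y => ?_⟩
  set n : ℕ := ⌈‖x - y‖ / (δ/2)⌉₊ with hn
  have hb : ‖x - y‖ ≤ n * (δ/2) := by
    have := Nat.le_ceil (‖x - y‖ / (δ/2))
    rw [← hn] at this
    calc ‖x - y‖ = ‖x - y‖ / (δ/2) * (δ/2) := by field_simp
      _ ≤ n * (δ/2) := by nlinarith
  have hlt : (n : ℝ) < ‖x - y‖ / (δ/2) + 1 := by
    rw [hn]
    exact Nat.ceil_lt_add_one (by positivity)
  have := key n x y hb
  have hd : ‖x - y‖ / (δ/2) = (2/δ) * ‖x - y‖ := by field_simp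
  rw [hd] at hlt
  nlinarith [norm_nonneg (x - y), (by positivity : (0:ℝ) ≤ 2/δ)]

lemma lipInf_nonneg {X Y : Type*} [NormedAddCommGroup X] [NormedSpace ℝ X]
    [NormedAddCommGroup Y] (f : X → Y) : 0 ≤ LipInf f := by
  rcases subsingleton_or_nontrivial X with hs | hn
  · have he : {A : ℝ | ∃ η > (0 : ℝ), ∀ x y : X, η ≤ ‖x - y‖ → ‖f x - f y‖ ≤ A * ‖x - y‖}
        = Set.univ := by
      ext A
      simp only [Set.mem_setOf_eq, Set.mem_univ, iff_true]
      refine ⟨1, one_pos, fun x y hxy => ?_⟩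
      have : x = y := Subsingleton.elim x y
      simp [this] at hxy
      linarith
    rw [LipInf, he]
    have : ¬ BddBelow (Set.univ : Set ℝ) := by
      simp [bddBelow_def]
      intro a; exact ⟨a - 1, by linarith⟩
    rw [csInf_of_not_bddBelow this, Real.sInf_empty]
  · apply Real.le_sInf _ le_rfl
    rintro A ⟨η, hη, hA⟩
    obtain ⟨x₀, hx₀⟩ := exists_ne (0 : X)
    have hnx : (0:ℝ) < ‖x₀‖ := norm_pos_iff.mpr hx₀
    set x : X := (η / ‖x₀‖) • x₀ with hx
    have hxn : ‖x - 0‖ = η := by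
      rw [sub_zero, hx, norm_smul, Real.norm_eq_abs, abs_of_pos (by positivity)]
      field_simp
    have := hA x 0 (le_of_eq hxn.symm)
    rw [hxn] at this
    nlinarith [norm_nonneg (f x - f 0)]

lemma lipInf_le_of_bound {X Y : Type*} [NormedAddCommGroup X] [NormedAddCommGroup Y]
    {f : X → Y} {K B : ℝ} (hK : 0 ≤ K) (hB : 0 < B)
    (h : ∀ x y : X, ‖f x - f y‖ ≤ K * ‖x - y‖ + B) : LipInf f ≤ K := by
  set S := {A : ℝ | ∃ η > (0 : ℝ), ∀ x y : X, η ≤ ‖x - y‖ → ‖f x - f y‖ ≤ A * ‖x - y‖} with hS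
  have hmem : ∀ η > (0:ℝ), (K + B/η) ∈ S := by
    intro η hη
    refine ⟨η, hη, fun x y hxy => ?_⟩
    have h1 : B ≤ B/η * ‖x - y‖ := by
      rw [div_mul_eq_mul_div, le_div_iff₀ hη]
      nlinarith
    have := h x y
    nlinarith
  by_cases hbd : BddBelow S
  · have hle : ∀ ε > (0:ℝ), LipInf f ≤ K + ε := by
      intro ε hε
      have := csInf_le hbd (hmem (B/ε) (by positivity))
      have he : B / (B/ε) = ε := by field_simp
      rwa [he] at this
    exact le_of_forall_pos_le_add hle
  · rw [LipInf, ← hS, csInf_of_not_bddBelow hbd, Real.sInf_empty]; exact hK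

set_option maxHeartbeats 2000000 in
theorem stmt19 (X Y : Type*)
    [NormedAddCommGroup X] [NormedSpace ℝ X] [CompleteSpace X]
    [NormedAddCommGroup Y] [NormedSpace ℝ Y] [CompleteSpace Y]
    (DX : Set X) (DY : Set Y) (hDX : Dense DX) (hDY : Dense DY)
    (r : ℝ) (hr : 0 < r) :
    (∃ u : X ≃ Y, UniformContinuous u ∧ UniformContinuous u.symm ∧
      LipInf (⇑u) * LipInf (⇑u.symm) < Real.exp r) ↔
    (∃ B > (0 : ℝ), ∃ r' ∈ Set.Ioo (0 : ℝ) r, ∃ R : ℕ → X → Y → Prop,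
      -- each ℛ_i is a correspondence between D_X and D_Y
      (∀ i x y, R i x y → x ∈ DX ∧ y ∈ DY) ∧
      (∀ i, ∀ x ∈ DX, ∃ y ∈ DY, R i x y) ∧
      (∀ i, ∀ y ∈ DY, ∃ x ∈ DX, R i x y) ∧
      -- decreasing in inclusion
      (∀ i x y, R (i + 1) x y → R i x y) ∧
      -- (1)
      (∀ (i : ℕ) (v v' : X) (w w' : Y), R i v w → R i v' w' →
        ‖w - w'‖ ≤ Real.exp r' * ‖v - v'‖ + B) ∧
      -- (2)
      (∀ (i : ℕ) (v v' : X) (w w' : Y), R i v w → R i v' w' →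
        ‖v - v'‖ ≤ ‖w - w'‖ + B) ∧
      -- (3)
      (∀ ε > (0 : ℝ), ∃ δ > (0 : ℝ), ∃ i : ℕ, ∀ (v v' : X) (w w' : Y),
        ‖v - v'‖ < δ → R i v w → R i v' w' → ‖w - w'‖ < ε) ∧
      -- (4)
      (∀ ε > (0 : ℝ), ∃ δ > (0 : ℝ), ∃ i : ℕ, ∀ (v v' : X) (w w' : Y),
        ‖w - w'‖ < δ → R i v w → R i v' w' → ‖v - v'‖ < ε)) := by
  constructor
  · rintro ⟨u, hu, hus, hprod⟩
    rcases subsingleton_or_nontrivial X with hsX | hnX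
    · have hsY : Subsingleton Y := u.symm.subsingleton
      obtain ⟨y₀, hy₀⟩ := hDY.nonempty
      obtain ⟨x₀, hx₀⟩ := hDX.nonempty
      refine ⟨1, one_pos, r/2, ⟨by linarith, by linarith⟩,
        fun _ x y => x ∈ DX ∧ y ∈ DY,
        fun i x y h => h,
        fun i x hx => ⟨y₀, hy₀, hx, hy₀⟩,
        fun i y hy => ⟨x₀, hx₀, hx₀, hy⟩,
        fun i x y h => h, ?_, ?_, ?_, ?_⟩
      · intro i v v' w w' _ _
        have : w = w' := Subsingleton.elim w w'
        simp [this]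
        positivity
      · intro i v v' w w' _ _
        have : v = v' := Subsingleton.elim v v'
        simp [this]
        positivity
      · intro ε hε
        refine ⟨1, one_pos, 0, fun v v' w w' _ _ _ => ?_⟩
        have : w = w' := Subsingleton.elim w w'
        simp [this, hε]
      · intro ε hε
        refine ⟨1, one_pos, 0, fun v v' w w' _ _ _ => ?_⟩
        have : v = v' := Subsingleton.elim v v'
        simp [this, hε]
    · -- nontrivial case
      have hnY : Nontrivial Y := by
        obtain ⟨x₀, x₁, hne⟩ := exists_pair_ne X
        exact ⟨u x₀, u x₁, fun h => hne (u.injective h)⟩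
      set a := LipInf (⇑u) with ha
      set b := LipInf (⇑u.symm) with hb
      have ha0 : 0 ≤ a := lipInf_nonneg _
      have hb0 : 0 ≤ b := lipInf_nonneg _
      -- the sets are nonempty
      have hSune : {A : ℝ | ∃ η > (0 : ℝ), ∀ x y : X, η ≤ ‖x - y‖ → ‖u x - u y‖ ≤ A * ‖x - y‖}.Nonempty := by
        obtain ⟨C, hC, hCb⟩ := aff_bound hu
        exact ⟨2*C, 1, one_pos, fun x y hxy => by nlinarith [hCb x y]⟩
      have hSvne : {A : ℝ | ∃ η > (0 : ℝ), ∀ x y : Y, η ≤ ‖x - y‖ → ‖u.symm x - u.symm y‖ ≤ A * ‖x - y‖}.Nonempty := by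
        obtain ⟨C, hC, hCb⟩ := aff_bound hus
        exact ⟨2*C, 1, one_pos, fun x y hxy => by nlinarith [hCb x y]⟩
      set ε := min 1 ((Real.exp r - a*b)/(2*(a+b+1))) with hε
      have hεpos : 0 < ε := by
        apply lt_min one_pos
        exact div_pos (sub_pos.mpr hprod) (by positivity)
      obtain ⟨A₁, hA₁S, hA₁lt⟩ := Real.lt_sInf_add_pos hSune hεpos
      obtain ⟨A₂, hA₂S, hA₂lt⟩ := Real.lt_sInf_add_pos hSvne hεpos
      have hA₁lt : A₁ < a + ε := hA₁lt
      have hA₂lt : A₂ < b + ε := hA₂lt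
      obtain ⟨η₁, hη₁, hA₁b⟩ := hA₁S
      obtain ⟨η₂, hη₂, hA₂b⟩ := hA₂S
      -- positivity of A₁ A₂
      have hA₁pos : 0 < A₁ := by
        obtain ⟨x₀, hx₀⟩ := exists_ne (0 : X)
        have hnx : (0:ℝ) < ‖x₀‖ := norm_pos_iff.mpr hx₀
        set x : X := (η₁ / ‖x₀‖) • x₀ with hx
        have hxn : ‖x - 0‖ = η₁ := by
          rw [sub_zero, hx, norm_smul, Real.norm_eq_abs, abs_of_pos (by positivity)]
          field_simp
        have hne : u x ≠ u 0 := fun h => by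
          have : x = (0:X) := u.injective h
          rw [this] at hxn; simp at hxn; linarith
        have h1 : 0 < ‖u x - u 0‖ := by
          rw [norm_pos_iff, sub_ne_zero]; exact hne
        have := hA₁b x 0 (le_of_eq hxn.symm)
        rw [hxn] at this
        nlinarith
      have hA₂pos : 0 < A₂ := by
        obtain ⟨y₀, hy₀⟩ := exists_ne (0 : Y)
        have hny : (0:ℝ) < ‖y₀‖ := norm_pos_iff.mpr hy₀
        set y : Y := (η₂ / ‖y₀‖) • y₀ with hy
        have hyn : ‖y - 0‖ = η₂ := by
          rw [sub_zero, hy, norm_smul, Real.norm_eq_abs, abs_of_pos (by positivity)]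
          field_simp
        have hne : u.symm y ≠ u.symm 0 := fun h => by
          have : y = (0:Y) := u.symm.injective h
          rw [this] at hyn; simp at hyn; linarith
        have h1 : 0 < ‖u.symm y - u.symm 0‖ := by
          rw [norm_pos_iff, sub_ne_zero]; exact hne
        have := hA₂b y 0 (le_of_eq hyn.symm)
        rw [hyn] at this
        nlinarith
      have hprod2 : A₁ * A₂ < Real.exp r := by
        have h1 : A₁ * A₂ < (a+ε)*(b+ε) := by nlinarith
        have hε1 : ε ≤ 1 := min_le_left _ _
        have hε2 : ε ≤ (Real.exp r - a*b)/(2*(a+b+1)) := min_le_right _ _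
        have h3 : ε * (2*(a+b+1)) ≤ Real.exp r - a*b := by
          rw [← le_div_iff₀ (by positivity)]; exact hε2
        nlinarith
      -- choice of r'
      set m := max (A₁*A₂) 1 with hm
      have hm1 : (1:ℝ) ≤ m := le_max_right _ _
      have hmpos : (0:ℝ) < m := lt_of_lt_of_le one_pos hm1
      have hmlt : m < Real.exp r := max_lt hprod2 (by
        rw [show (1:ℝ) = Real.exp 0 by simp]
        exact Real.exp_lt_exp.mpr hr)
      have hlog0 : 0 ≤ Real.log m := Real.log_nonneg hm1
      have hlogr : Real.log m < r := (Real.log_lt_iff_lt_exp hmpos).mpr hmlt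
      set r' := (Real.log m + r)/2 with hr'
      have hr'0 : 0 < r' := by positivity
      have hr'r : r' < r := by rw [hr']; linarith
      have hmexp : A₁ * A₂ ≤ Real.exp r' := by
        have h1 : Real.log m < r' := by rw [hr']; linarith
        have h2 : m < Real.exp r' := (Real.log_lt_iff_lt_exp hmpos).mp h1
        exact le_trans (le_max_left _ _) h2.le
      -- scaled maps
      set g : X → Y := fun x => u (A₂ • x) with hg
      set g' : Y → X := fun y => A₂⁻¹ • u.symm y with hg'
      have hgg' : ∀ x, g' (g x) = x := by
        intro x
        simp only [hg, hg', Equiv.symm_apply_apply, smul_smul,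
          inv_mul_cancel₀ (ne_of_gt hA₂pos), one_smul]
      have hg'g : ∀ y, g (g' y) = y := by
        intro y
        simp only [hg, hg', smul_smul, mul_inv_cancel₀ (ne_of_gt hA₂pos), one_smul,
          Equiv.apply_symm_apply]
      have hgUC : UniformContinuous g := hu.comp (uniformContinuous_const_smul A₂)
      have hg'UC : UniformContinuous g' := (uniformContinuous_const_smul A₂⁻¹).comp hus
      obtain ⟨Cg, hCg, hCgb⟩ := aff_bound hgUC
      obtain ⟨Cg', hCg', hCg'b⟩ := aff_bound hg'UC
      set B₁ := Cg * (η₁/A₂) + Cg with hB₁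
      set B₂ := Cg' * η₂ + Cg' with hB₂
      have hB₁pos : 0 < B₁ := by positivity
      have hB₂pos : 0 < B₂ := by positivity
      have hgbound : ∀ x y : X, ‖g x - g y‖ ≤ Real.exp r' * ‖x - y‖ + B₁ := by
        intro x y
        by_cases hc : η₁/A₂ ≤ ‖x - y‖
        · have hsm : ‖A₂ • x - A₂ • y‖ = A₂ * ‖x - y‖ := by
            rw [← smul_sub, norm_smul, Real.norm_eq_abs, abs_of_pos hA₂pos]
          have hge : η₁ ≤ ‖A₂ • x - A₂ • y‖ := by
            rw [hsm, ← div_le_iff₀' hA₂pos]; exact hc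
          have := hA₁b (A₂ • x) (A₂ • y) hge
          rw [hsm] at this
          have h2 : A₁ * (A₂ * ‖x-y‖) ≤ Real.exp r' * ‖x-y‖ := by
            rw [← mul_assoc]
            exact mul_le_mul_of_nonneg_right hmexp (norm_nonneg _)
          calc ‖g x - g y‖ ≤ A₁ * (A₂ * ‖x-y‖) := this
            _ ≤ Real.exp r' * ‖x-y‖ := h2
            _ ≤ Real.exp r' * ‖x-y‖ + B₁ := by linarith
        · push_neg at hc
          have := hCgb x y
          have h2 : Cg * ‖x - y‖ ≤ Cg * (η₁/A₂) := mul_le_mul_of_nonneg_left hc.le hCg.le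
          have h3 : 0 ≤ Real.exp r' * ‖x - y‖ := by positivity
          rw [hB₁]; linarith
      have hg'bound : ∀ w w' : Y, ‖g' w - g' w'‖ ≤ ‖w - w'‖ + B₂ := by
        intro w w'
        by_cases hc : η₂ ≤ ‖w - w'‖
        · have := hA₂b w w' hc
          have hsm : ‖g' w - g' w'‖ = A₂⁻¹ * ‖u.symm w - u.symm w'‖ := by
            rw [hg']
            simp only
            rw [← smul_sub, norm_smul, Real.norm_eq_abs, abs_of_pos (by positivity)]
          rw [hsm]
          have h2 : A₂⁻¹ * ‖u.symm w - u.symm w'‖ ≤ A₂⁻¹ * (A₂ * ‖w - w'‖) :=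
            mul_le_mul_of_nonneg_left this (by positivity)
          rw [← mul_assoc, inv_mul_cancel₀ (ne_of_gt hA₂pos), one_mul] at h2
          linarith
        · push_neg at hc
          have := hCg'b w w'
          have h2 : Cg' * ‖w - w'‖ ≤ Cg' * η₂ := mul_le_mul_of_nonneg_left hc.le hCg'.le
          have h3 : 0 ≤ ‖w - w'‖ := norm_nonneg _
          rw [hB₂]; linarith
      set B := B₁ + B₂ + 2 with hB
      have hBpos : 0 < B := by positivity
      refine ⟨B, hBpos, r', ⟨hr'0, hr'r⟩,
        fun i v w => v ∈ DX ∧ w ∈ DY ∧ ‖g v - w‖ ≤ 1/(i+1), ?_, ?_, ?_, ?_, ?_, ?_, ?_, ?_⟩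
      · exact fun i x y h => ⟨h.1, h.2.1⟩
      · intro i x hx
        obtain ⟨w, hw, hd⟩ := hDY.exists_dist_lt (g x) (show (0:ℝ) < 1/(i+1) by positivity)
        rw [dist_eq_norm] at hd
        exact ⟨w, hw, hx, hw, hd.le⟩
      · intro i y hy
        obtain ⟨δ, hδ, hδi⟩ := Metric.uniformContinuous_iff.mp hgUC (1/(i+1)) (by positivity)
        obtain ⟨v, hv, hd⟩ := hDX.exists_dist_lt (g' y) hδ
        have : dist (g v) (g (g' y)) < 1/(i+1) := hδi (by rwa [dist_comm] at hd)
        rw [hg'g y, dist_eq_norm] at this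
        exact ⟨v, hv, hv, hy, this.le⟩
      · intro i x y h
        refine ⟨h.1, h.2.1, le_trans h.2.2 ?_⟩
        have h1 : (0:ℝ) < (i:ℝ)+1 := by positivity
        have h2 : ((i:ℝ)+1) ≤ ((i:ℝ)+1+1) := by linarith
        have := one_div_le_one_div_of_le h1 h2
        calc (1:ℝ)/(↑(i+1)+1) = 1/((i:ℝ)+1+1) := by push_cast; ring_nf
          _ ≤ 1/((i:ℝ)+1) := this
      · rintro i v v' w w' ⟨-, -, hw⟩ ⟨-, -, hw'⟩
        have htri : ‖w - w'‖ ≤ ‖g v - w‖ + ‖g v - g v'‖ + ‖g v' - w'‖ := by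
          have : w - w' = -(g v - w) + (g v - g v') + (g v' - w') := by abel
          rw [this]
          refine le_trans (norm_add_le _ _) ?_
          have := norm_add_le (-(g v - w)) (g v - g v')
          rw [norm_neg] at this
          linarith
        have hone : (1:ℝ)/(i+1) ≤ 1 := by
          rw [div_le_one (by positivity)]
          have : (0:ℝ) ≤ i := Nat.cast_nonneg i
          linarith
        have := hgbound v v'
        rw [hB]; linarith
      · rintro i v v' w w' ⟨-, -, hw⟩ ⟨-, -, hw'⟩
        have hveq : ‖v - v'‖ = ‖g' (g v) - g' (g v')‖ := by rw [hgg', hgg']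
        have h1 := hg'bound (g v) (g v')
        have htri : ‖g v - g v'‖ ≤ ‖g v - w‖ + ‖w - w'‖ + ‖w' - g v'‖ := by
          have : g v - g v' = (g v - w) + (w - w') + (w' - g v') := by abel
          rw [this]
          refine le_trans (norm_add_le _ _) ?_
          have := norm_add_le (g v - w) (w - w')
          linarith
        have hrev : ‖w' - g v'‖ = ‖g v' - w'‖ := norm_sub_rev _ _
        have hone : (1:ℝ)/(i+1) ≤ 1 := by
          rw [div_le_one (by positivity)]
          have : (0:ℝ) ≤ i := Nat.cast_nonneg i
          linarith
        rw [hveq, hB]; linarith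
      · intro ε hε
        obtain ⟨δ, hδ, hδi⟩ := Metric.uniformContinuous_iff.mp hgUC (ε/2) (by positivity)
        obtain ⟨i, hi⟩ := exists_nat_one_div_lt (show (0:ℝ) < ε/4 by positivity)
        refine ⟨δ, hδ, i, ?_⟩
        rintro v v' w w' hvv ⟨-, -, hw⟩ ⟨-, -, hw'⟩
        have hgd : dist (g v) (g v') < ε/2 := hδi (by rwa [dist_eq_norm])
        rw [dist_eq_norm] at hgd
        have htri : ‖w - w'‖ ≤ ‖g v - w‖ + ‖g v - g v'‖ + ‖g v' - w'‖ := by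
          have : w - w' = -(g v - w) + (g v - g v') + (g v' - w') := by abel
          rw [this]
          refine le_trans (norm_add_le _ _) ?_
          have := norm_add_le (-(g v - w)) (g v - g v')
          rw [norm_neg] at this
          linarith
        have hic : (1:ℝ)/(i+1) < ε/4 := hi
        linarith
      · intro ε hε
        obtain ⟨δ', hδ', hδ'i⟩ := Metric.uniformContinuous_iff.mp hg'UC ε hε
        obtain ⟨i, hi⟩ := exists_nat_one_div_lt (show (0:ℝ) < δ'/4 by positivity)
        refine ⟨δ'/2, by positivity, i, ?_⟩
        rintro v v' w w' hww ⟨-, -, hw⟩ ⟨-, -, hw'⟩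
        have hic : (1:ℝ)/(i+1) < δ'/4 := hi
        have htri : ‖g v - g v'‖ ≤ ‖g v - w‖ + ‖w - w'‖ + ‖w' - g v'‖ := by
          have : g v - g v' = (g v - w) + (w - w') + (w' - g v') := by abel
          rw [this]
          refine le_trans (norm_add_le _ _) ?_
          have := norm_add_le (g v - w) (w - w')
          linarith
        have hrev : ‖w' - g v'‖ = ‖g v' - w'‖ := norm_sub_rev _ _
        have hgd : ‖g v - g v'‖ < δ' := by linarith
        have := hδ'i (show dist (g v) (g v') < δ' by rwa [dist_eq_norm])
        rw [dist_eq_norm, hgg', hgg'] at this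
        exact this
  · rintro ⟨B, hB, r', ⟨hr'0, hr'r⟩, R, hmem, hsX, hsY, hdec, h1, h2, h3, h4⟩
    have hmono : ∀ i j, i ≤ j → ∀ x y, R j x y → R i x y := by
      intro i j hij
      induction hij with
      | refl => exact fun x y h => h
      | @step m _ ih => exact fun x y h => ih x y (hdec m x y h)
    -- canonical approximating sequences
    have hVx : ∀ (x : X) (n : ℕ), ∃ v, v ∈ DX ∧ ‖x - v‖ < 1/(n+1) := by
      intro x n
      obtain ⟨v, hv, hd⟩ := hDX.exists_dist_lt x (show (0:ℝ) < 1/(n+1) by positivity)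
      exact ⟨v, hv, by rwa [dist_eq_norm] at hd⟩
    choose V hV1 hV2 using hVx
    have hWx : ∀ (x : X) (n : ℕ), ∃ w, R n (V x n) w := by
      intro x n
      obtain ⟨w, _, hw⟩ := hsX n (V x n) (hV1 x n)
      exact ⟨w, hw⟩
    choose W hW using hWx
    have hVy : ∀ (y : Y) (n : ℕ), ∃ w, w ∈ DY ∧ ‖y - w‖ < 1/(n+1) := by
      intro y n
      obtain ⟨w, hw, hd⟩ := hDY.exists_dist_lt y (show (0:ℝ) < 1/(n+1) by positivity)
      exact ⟨w, hw, by rwa [dist_eq_norm] at hd⟩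
    choose V' hV'1 hV'2 using hVy
    have hWy : ∀ (y : Y) (n : ℕ), ∃ v, R n v (V' y n) := by
      intro y n
      obtain ⟨v, _, hv⟩ := hsY n (V' y n) (hV'1 y n)
      exact ⟨v, hv⟩
    choose W' hW' using hWy
    -- convergence of V x to x
    have hVtend : ∀ x : X, Tendsto (V x) atTop (𝓝 x) := by
      intro x
      rw [tendsto_iff_dist_tendsto_zero]
      apply squeeze_zero (fun n => dist_nonneg) (fun n => ?_) tendsto_one_div_add_atTop_nhds_zero_nat
      rw [dist_comm, dist_eq_norm]
      exact (hV2 x n).le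
    have hV'tend : ∀ y : Y, Tendsto (V' y) atTop (𝓝 y) := by
      intro y
      rw [tendsto_iff_dist_tendsto_zero]
      apply squeeze_zero (fun n => dist_nonneg) (fun n => ?_) tendsto_one_div_add_atTop_nhds_zero_nat
      rw [dist_comm, dist_eq_norm]
      exact (hV'2 y n).le
    -- Cauchyness
    have hCauchy : ∀ x : X, CauchySeq (W x) := by
      intro x
      rw [Metric.cauchySeq_iff]
      intro ε hε
      obtain ⟨δ, hδ, i, hi⟩ := h3 ε hε
      obtain ⟨N₀, hN₀⟩ := (Metric.tendsto_atTop.mp (hVtend x)) (δ/2) (by positivity)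
      refine ⟨max N₀ i, fun m hm n hn => ?_⟩
      have hm0 := le_of_max_le_left hm
      have hn0 := le_of_max_le_left hn
      have hd : ‖V x m - V x n‖ < δ := by
        have d1 := hN₀ m hm0
        have d2 := hN₀ n hn0
        rw [← dist_eq_norm]
        calc dist (V x m) (V x n) ≤ dist (V x m) x + dist x (V x n) := dist_triangle _ _ _
          _ < δ := by rw [dist_comm x (V x n)]; linarith
      have r1 : R i (V x m) (W x m) := hmono i m (le_of_max_le_right hm) _ _ (hW x m)
      have r2 : R i (V x n) (W x n) := hmono i n (le_of_max_le_right hn) _ _ (hW x n)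
      rw [dist_eq_norm]
      exact hi _ _ _ _ hd r1 r2
    have hCauchy' : ∀ y : Y, CauchySeq (W' y) := by
      intro y
      rw [Metric.cauchySeq_iff]
      intro ε hε
      obtain ⟨δ, hδ, i, hi⟩ := h4 ε hε
      obtain ⟨N₀, hN₀⟩ := (Metric.tendsto_atTop.mp (hV'tend y)) (δ/2) (by positivity)
      refine ⟨max N₀ i, fun m hm n hn => ?_⟩
      have hm0 := le_of_max_le_left hm
      have hn0 := le_of_max_le_left hn
      have hd : ‖V' y m - V' y n‖ < δ := by
        have d1 := hN₀ m hm0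
        have d2 := hN₀ n hn0
        rw [← dist_eq_norm]
        calc dist (V' y m) (V' y n) ≤ dist (V' y m) y + dist y (V' y n) := dist_triangle _ _ _
          _ < δ := by rw [dist_comm y (V' y n)]; linarith
      have r1 : R i (W' y m) (V' y m) := hmono i m (le_of_max_le_right hm) _ _ (hW' y m)
      have r2 : R i (W' y n) (V' y n) := hmono i n (le_of_max_le_right hn) _ _ (hW' y n)
      rw [dist_eq_norm]
      exact hi _ _ _ _ hd r1 r2
    have hFex : ∀ x : X, ∃ y : Y, Tendsto (W x) atTop (𝓝 y) :=
      fun x => cauchySeq_tendsto_of_complete (hCauchy x)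
    choose F hF using hFex
    have hGex : ∀ y : Y, ∃ x : X, Tendsto (W' y) atTop (𝓝 x) :=
      fun y => cauchySeq_tendsto_of_complete (hCauchy' y)
    choose G hG using hGex
    -- master lemmas
    have hMaster : ∀ (x : X) (v : ℕ → X) (w : ℕ → Y), (∀ n, R n (v n) (w n)) →
        Tendsto v atTop (𝓝 x) → Tendsto w atTop (𝓝 (F x)) := by
      intro x v w hrel hv
      have hd0 : Tendsto (fun n => dist (W x n) (w n)) atTop (𝓝 0) := by
        rw [Metric.tendsto_atTop]
        intro ε hε
        obtain ⟨δ, hδ, i, hi⟩ := h3 ε hε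
        obtain ⟨N₁, hN₁⟩ := (Metric.tendsto_atTop.mp hv) (δ/4) (by positivity)
        obtain ⟨N₂, hN₂⟩ := (Metric.tendsto_atTop.mp (hVtend x)) (δ/4) (by positivity)
        refine ⟨max (max N₁ N₂) i, fun n hn => ?_⟩
        have hn1 := le_of_max_le_left (le_of_max_le_left hn)
        have hn2 := le_of_max_le_right (le_of_max_le_left hn)
        have hni := le_of_max_le_right hn
        have d1 := hN₁ n hn1
        have d2 := hN₂ n hn2
        have hd : ‖V x n - v n‖ < δ := by
          rw [← dist_eq_norm]
          calc dist (V x n) (v n) ≤ dist (V x n) x + dist x (v n) := dist_triangle _ _ _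
            _ < δ := by rw [dist_comm x (v n)]; linarith
        have r1 : R i (V x n) (W x n) := hmono i n hni _ _ (hW x n)
        have r2 : R i (v n) (w n) := hmono i n hni _ _ (hrel n)
        have := hi _ _ _ _ hd r1 r2
        rw [Real.dist_eq, sub_zero, abs_of_nonneg dist_nonneg, dist_eq_norm]
        exact this
      exact (hF x).congr_dist hd0
    have hMaster' : ∀ (y : Y) (v : ℕ → X) (w : ℕ → Y), (∀ n, R n (v n) (w n)) →
        Tendsto w atTop (𝓝 y) → Tendsto v atTop (𝓝 (G y)) := by
      intro y v w hrel hw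
      have hd0 : Tendsto (fun n => dist (W' y n) (v n)) atTop (𝓝 0) := by
        rw [Metric.tendsto_atTop]
        intro ε hε
        obtain ⟨δ, hδ, i, hi⟩ := h4 ε hε
        obtain ⟨N₁, hN₁⟩ := (Metric.tendsto_atTop.mp hw) (δ/4) (by positivity)
        obtain ⟨N₂, hN₂⟩ := (Metric.tendsto_atTop.mp (hV'tend y)) (δ/4) (by positivity)
        refine ⟨max (max N₁ N₂) i, fun n hn => ?_⟩
        have hn1 := le_of_max_le_left (le_of_max_le_left hn)
        have hn2 := le_of_max_le_right (le_of_max_le_left hn)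
        have hni := le_of_max_le_right hn
        have d1 := hN₁ n hn1
        have d2 := hN₂ n hn2
        have hd : ‖V' y n - w n‖ < δ := by
          rw [← dist_eq_norm]
          calc dist (V' y n) (w n) ≤ dist (V' y n) y + dist y (w n) := dist_triangle _ _ _
            _ < δ := by rw [dist_comm y (w n)]; linarith
        have r1 : R i (W' y n) (V' y n) := hmono i n hni _ _ (hW' y n)
        have r2 : R i (v n) (w n) := hmono i n hni _ _ (hrel n)
        have := hi _ _ _ _ hd r1 r2
        rw [Real.dist_eq, sub_zero, abs_of_nonneg dist_nonneg, dist_eq_norm]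
        exact this
      exact (hG y).congr_dist hd0
    -- inverse identities
    have hGF : ∀ x : X, G (F x) = x := by
      intro x
      have h1 : Tendsto (V x) atTop (𝓝 (G (F x))) :=
        hMaster' (F x) (V x) (W x) (hW x) (hF x)
      exact tendsto_nhds_unique h1 (hVtend x)
    have hFG : ∀ y : Y, F (G y) = y := by
      intro y
      have h0 : Tendsto (W' y) atTop (𝓝 (G y)) :=
        hMaster' y (W' y) (V' y) (hW' y) (hV'tend y)
      have h1 : Tendsto (V' y) atTop (𝓝 (F (G y))) :=
        hMaster (G y) (W' y) (V' y) (hW' y) h0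
      exact tendsto_nhds_unique h1 (hV'tend y)
    -- uniform continuity of F
    have hFuc : UniformContinuous F := by
      rw [Metric.uniformContinuous_iff]
      intro ε hε
      obtain ⟨δ, hδ, i, hi⟩ := h3 (ε/2) (by positivity)
      refine ⟨δ/2, by positivity, fun {x x'} hxx => ?_⟩
      have hkey : ∀ᶠ n in atTop, dist (W x n) (W x' n) ≤ ε/2 := by
        have hv : Tendsto (fun n => ‖V x n - V x' n‖) atTop (𝓝 ‖x - x'‖) :=
          ((hVtend x).sub (hVtend x')).norm
        have hlt : ∀ᶠ n in atTop, ‖V x n - V x' n‖ < δ := by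
          apply (hv.eventually (eventually_lt_nhds ?_))
          rw [← dist_eq_norm]; linarith
        filter_upwards [hlt, eventually_ge_atTop i] with n hn hni
        have r1 : R i (V x n) (W x n) := hmono i n hni _ _ (hW x n)
        have r2 : R i (V x' n) (W x' n) := hmono i n hni _ _ (hW x' n)
        rw [dist_eq_norm]
        exact (hi _ _ _ _ hn r1 r2).le
      have hdist : Tendsto (fun n => dist (W x n) (W x' n)) atTop (𝓝 (dist (F x) (F x'))) :=
        (hF x).dist (hF x')
      have := le_of_tendsto hdist hkey
      linarith
    have hGuc : UniformContinuous G := by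
      rw [Metric.uniformContinuous_iff]
      intro ε hε
      obtain ⟨δ, hδ, i, hi⟩ := h4 (ε/2) (by positivity)
      refine ⟨δ/2, by positivity, fun {y y'} hyy => ?_⟩
      have hkey : ∀ᶠ n in atTop, dist (W' y n) (W' y' n) ≤ ε/2 := by
        have hv : Tendsto (fun n => ‖V' y n - V' y' n‖) atTop (𝓝 ‖y - y'‖) :=
          ((hV'tend y).sub (hV'tend y')).norm
        have hlt : ∀ᶠ n in atTop, ‖V' y n - V' y' n‖ < δ := by
          apply (hv.eventually (eventually_lt_nhds ?_))
          rw [← dist_eq_norm]; linarith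
        filter_upwards [hlt, eventually_ge_atTop i] with n hn hni
        have r1 : R i (W' y n) (V' y n) := hmono i n hni _ _ (hW' y n)
        have r2 : R i (W' y' n) (V' y' n) := hmono i n hni _ _ (hW' y' n)
        rw [dist_eq_norm]
        exact (hi _ _ _ _ hn r1 r2).le
      have hdist : Tendsto (fun n => dist (W' y n) (W' y' n)) atTop (𝓝 (dist (G y) (G y'))) :=
        (hG y).dist (hG y')
      have := le_of_tendsto hdist hkey
      linarith
    -- global bounds
    have hFbound : ∀ x x' : X, ‖F x - F x'‖ ≤ Real.exp r' * ‖x - x'‖ + B := by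
      intro x x'
      have hlim1 : Tendsto (fun n => ‖W x n - W x' n‖) atTop (𝓝 ‖F x - F x'‖) :=
        ((hF x).sub (hF x')).norm
      have hlim2 : Tendsto (fun n => Real.exp r' * ‖V x n - V x' n‖ + B) atTop
          (𝓝 (Real.exp r' * ‖x - x'‖ + B)) :=
        ((((hVtend x).sub (hVtend x')).norm).const_mul _).add_const _
      refine le_of_tendsto_of_tendsto' hlim1 hlim2 fun n => ?_
      exact h1 n _ _ _ _ (hW x n) (hW x' n)
    have hGbound : ∀ y y' : Y, ‖G y - G y'‖ ≤ 1 * ‖y - y'‖ + B := by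
      intro y y'
      have hlim1 : Tendsto (fun n => ‖W' y n - W' y' n‖) atTop (𝓝 ‖G y - G y'‖) := by
        have h0 : Tendsto (W' y) atTop (𝓝 (G y)) :=
          hMaster' y (W' y) (V' y) (hW' y) (hV'tend y)
        have h0' : Tendsto (W' y') atTop (𝓝 (G y')) :=
          hMaster' y' (W' y') (V' y') (hW' y') (hV'tend y')
        exact (h0.sub h0').norm
      have hlim2 : Tendsto (fun n => ‖V' y n - V' y' n‖ + B) atTop (𝓝 (‖y - y'‖ + B)) :=
        (((hV'tend y).sub (hV'tend y')).norm).add_const _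
      have := le_of_tendsto_of_tendsto' hlim1 hlim2 fun n =>
        h2 n _ _ _ _ (hW' y n) (hW' y' n)
      rw [one_mul]
      exact this
    -- assemble
    refine ⟨⟨F, G, hGF, hFG⟩, ?_, ?_, ?_⟩
    · exact hFuc
    · exact hGuc
    · simp only [Equiv.coe_fn_mk, Equiv.coe_fn_symm_mk]
      have hFle : LipInf F ≤ Real.exp r' :=
        lipInf_le_of_bound (Real.exp_pos r').le hB hFbound
      have hGle : LipInf G ≤ 1 := lipInf_le_of_bound zero_le_one hB hGbound
      have hF0 : 0 ≤ LipInf F := lipInf_nonneg _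
      have hG0 : 0 ≤ LipInf G := lipInf_nonneg _
      calc LipInf F * LipInf G ≤ Real.exp r' * 1 :=
            mul_le_mul hFle hGle hG0 (Real.exp_pos r').le
        _ = Real.exp r' := mul_one _
        _ < Real.exp r := Real.exp_lt_exp.mpr hr'r
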